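/- (Concentration of a random matrix on a single vector.) Let A be an m×n isotropic, sub-gaussian random matrix with parameter K ≥ 1. Then there is an absolute constant C > 0 such that for every unit vector x ∈ S^{n−1}, one has ‖ ‖Ax‖₂ − √m ‖_{ψ₂} ≤ C·K². -/

import Mathlib

/-!
Write `Yᵢ = ⟨Aᵢ, x⟩`, so that `‖Ax‖² = ∑ Yᵢ²` and the `Yᵢ² - 1` are independent, centred
and sub-exponential with parameter `O(K²)`; Bernstein's inequality then controls
`|‖Ax‖² - m|`. Since `|‖Ax‖² - m| = |‖Ax‖ - √m| (‖Ax‖ + √m)`, a deviation `t` of `‖Ax‖`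
from `√m` forces a deviation `max (t √m) t²` of `‖Ax‖²` from `m`, and in both regimes of
Bernstein's bound this has probability at most `2 exp (-t² / C K⁴)`. A sub-gaussian tail
integrates to a ψ₂ bound.
-/

open MeasureTheory ProbabilityTheory

noncomputable section

/-- Euclidean (ℓ²) norm of a vector in ℝⁿ. -/
def l2norm {n : ℕ} (v : Fin n → ℝ) : ℝ := Real.sqrt (∑ i, (v i) ^ 2)

/-- Matrix-vector product. -/
def matVec {m n : ℕ} (A : Fin m → Fin n → ℝ) (x : Fin n → ℝ) : Fin m → ℝ :=
  fun i => ∑ j, A i j * x j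

/-- The sub-gaussian (ψ₂) norm of a real random variable:
`inf {K > 0 : E exp(Z²/K²) ≤ 2}`. -/
def psi2Norm {Ω : Type*} [MeasurableSpace Ω] (μ : Measure Ω) (Z : Ω → ℝ) : ℝ :=
  sInf {K : ℝ | 0 < K ∧ ∫ ω, Real.exp (Z ω ^ 2 / K ^ 2) ∂μ ≤ 2}

/-- The standard gaussian measure on ℝⁿ, i.e. the law of g ∼ N(0, Iₙ). -/
def stdGaussian (n : ℕ) : Measure (Fin n → ℝ) :=
  Measure.pi fun _ => gaussianReal 0 1

/-- Gaussian complexity γ(T) = E sup_{x ∈ T} |⟨g, x⟩|. -/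
def gaussianComplexity {n : ℕ} (T : Set (Fin n → ℝ)) : ℝ :=
  ∫ g, (⨆ x : T, |∑ j, g j * (x : Fin n → ℝ) j|) ∂stdGaussian n

/-- Gaussian width w(T) = E sup_{x ∈ T} ⟨g, x⟩. -/
def gaussianWidth {n : ℕ} (T : Set (Fin n → ℝ)) : ℝ :=
  ∫ g, (⨆ x : T, ∑ j, g j * (x : Fin n → ℝ) j) ∂stdGaussian n

/-- Radius rad(T) = sup_{x ∈ T} ‖x‖₂. -/
def radius {n : ℕ} (T : Set (Fin n → ℝ)) : ℝ := ⨆ x : T, l2norm (x : Fin n → ℝ)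

/-- An m × n random matrix `A` (with rows `A ω i`) is isotropic and sub-gaussian with
parameter `K`: its rows are independent random vectors, each row is isotropic
(`E Aᵢ Aᵢᵀ = Iₙ`), and each row has sub-gaussian norm at most `K`. -/
structure IsIsotropicSubGaussian {Ω : Type*} [MeasurableSpace Ω] (μ : Measure Ω)
    {m n : ℕ} (A : Ω → Fin m → Fin n → ℝ) (K : ℝ) : Prop where
  measurable : Measurable A
  indep : iIndepFun (fun i ω => A ω i) μ
  isotropic : ∀ i j k, ∫ ω, A ω i j * A ω i k ∂μ = if j = k then 1 else 0
  subgaussian : ∀ i (θ : Fin n → ℝ), l2norm θ = 1 →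
    psi2Norm μ (fun ω => ∑ j, A ω i j * θ j) ≤ K


open Filter Topology Set Real

lemma exp_le_one_add_add_sq_mul_exp {x : ℝ} (hx : 0 ≤ x) : exp x ≤ 1 + x + x ^ 2 * exp x := by
  rcases le_or_gt 1 x with h | h
  · nlinarith [mul_nonneg (by nlinarith : 0 ≤ x ^ 2 - 1) (exp_pos x).le]
  · nlinarith [add_one_le_exp (-x), exp_neg x, mul_inv_cancel₀ (exp_pos x).ne', exp_pos x]

lemma exp_neg_le_one_sub_add_sq {u : ℝ} (hu : 0 ≤ u) : exp (-u) ≤ 1 - u + u ^ 2 := by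
  nlinarith [add_one_le_exp u, exp_neg u, mul_inv_cancel₀ (exp_pos u).ne', exp_pos (-u)]

lemma sq_le_two_mul_exp {u : ℝ} (hu : 0 ≤ u) : u ^ 2 ≤ 2 * exp u := by
  have := pow_div_factorial_le_exp u hu 2
  norm_num at this
  linarith

lemma pow_four_le_mul_exp_sq_div {L : ℝ} (hL : L ≠ 0) (y : ℝ) :
    y ^ 4 ≤ 2 * L ^ 4 * exp (y ^ 2 / L ^ 2) := by
  have h := sq_le_two_mul_exp (u := y ^ 2 / L ^ 2) (by positivity)
  rw [div_pow, div_le_iff₀ (by positivity)] at h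
  linarith

lemma exp_mul_sq_le {L s : ℝ} (hL : L ≠ 0) (hs : s ≤ (4 * L ^ 2)⁻¹) (y : ℝ) :
    exp (s * y ^ 2) ≤ 1 + s * y ^ 2 + 32 * L ^ 4 * s ^ 2 * exp (y ^ 2 / L ^ 2) := by
  have hL2 : 0 < L ^ 2 := by positivity
  rcases le_or_gt 0 s with hs0 | hs0
  · have hsv : s * y ^ 2 ≤ y ^ 2 / (4 * L ^ 2) := by
      rw [div_eq_inv_mul]; exact mul_le_mul_of_nonneg_right hs (sq_nonneg y)
    have hy4 : y ^ 4 ≤ 32 * L ^ 4 * exp (y ^ 2 / (4 * L ^ 2)) := by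
      have h := pow_four_le_mul_exp_sq_div (mul_ne_zero two_ne_zero hL) y
      rw [mul_pow, mul_pow] at h
      norm_num at h
      linarith
    have hev : exp (y ^ 2 / (4 * L ^ 2)) * exp (y ^ 2 / (4 * L ^ 2)) =
        exp (y ^ 2 / (2 * L ^ 2)) := by
      rw [← exp_add]; congr 1; field_simp; ring
    calc exp (s * y ^ 2) ≤ 1 + s * y ^ 2 + (s * y ^ 2) ^ 2 * exp (s * y ^ 2) :=
          exp_le_one_add_add_sq_mul_exp (by positivity)
      _ ≤ 1 + s * y ^ 2 + s ^ 2 * (32 * L ^ 4 * exp (y ^ 2 / (4 * L ^ 2))) *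
            exp (y ^ 2 / (4 * L ^ 2)) := by
          rw [mul_pow, ← pow_mul]
          gcongr
      _ = 1 + s * y ^ 2 + 32 * L ^ 4 * s ^ 2 * exp (y ^ 2 / (2 * L ^ 2)) := by
          rw [← hev]; ring
      _ ≤ 1 + s * y ^ 2 + 32 * L ^ 4 * s ^ 2 * exp (y ^ 2 / L ^ 2) := by gcongr; linarith
  · have h := exp_neg_le_one_sub_add_sq (u := -s * y ^ 2) (by nlinarith [sq_nonneg y])
    have h4 := pow_four_le_mul_exp_sq_div hL y
    rw [neg_mul, neg_neg] at h
    nlinarith [sq_nonneg s, exp_pos (y ^ 2 / L ^ 2), pow_pos hL2 2]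

lemma le_abs_sq_sub_sq_of_le_abs_sub {N r t : ℝ} (hN : 0 ≤ N) (hr : 0 ≤ r) (ht : 0 ≤ t)
    (h : t ≤ |N - r|) : max (t * r) (t ^ 2) ≤ |N ^ 2 - r ^ 2| := by
  have hfac : |N ^ 2 - r ^ 2| = |N - r| * (N + r) := by
    rw [sq_sub_sq, abs_mul, abs_of_nonneg (by positivity : 0 ≤ N + r), mul_comm]
  have hle : |N - r| ≤ N + r := abs_le.2 ⟨by linarith, by linarith⟩
  rw [hfac]
  apply max_le
  · nlinarith [abs_nonneg (N - r)]
  · nlinarith [abs_nonneg (N - r)]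

lemma sq_le_two_mul_sq_sqrt_sum_sq_sub_add {ι : Type*} [Fintype ι] (y : ι → ℝ) (i : ι) (r : ℝ) :
    y i ^ 2 ≤ 2 * (√(∑ j, y j ^ 2) - r) ^ 2 + 2 * r ^ 2 := by
  have h : y i ^ 2 ≤ √(∑ j, y j ^ 2) ^ 2 := by
    rw [sq_sqrt (Finset.sum_nonneg fun j _ => sq_nonneg _)]
    exact Finset.single_le_sum (f := fun j => y j ^ 2) (fun j _ => sq_nonneg _)
      (Finset.mem_univ i)
  nlinarith [sq_nonneg (√(∑ j, y j ^ 2) - 2 * r)]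

lemma hasDerivAt_neg_one_add_rpow_neg_two {x : ℝ} (hx : 0 < x) :
    HasDerivAt (fun t : ℝ => -(1 + t) ^ (-2 : ℝ)) (2 * (1 + x) ^ (-3 : ℝ)) x := by
  have h : HasDerivAt (fun t : ℝ => (1 + t) ^ (-2 : ℝ)) (1 * -2 * (1 + x) ^ (-2 - 1 : ℝ)) x :=
    ((hasDerivAt_id' x).const_add 1).rpow_const (Or.inl (by linarith))
  refine h.fun_neg.congr_deriv ?_
  norm_num

lemma integrableOn_and_integral_Ioi_two_mul_one_add_rpow_neg_three :
    IntegrableOn (fun t : ℝ => 2 * (1 + t) ^ (-3 : ℝ)) (Ioi 0) ∧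
      ∫ t in Ioi (0 : ℝ), 2 * (1 + t) ^ (-3 : ℝ) = 1 := by
  have hcont : ContinuousWithinAt (fun t : ℝ => -(1 + t) ^ (-2 : ℝ)) (Ici 0) 0 :=
    ((continuousAt_const.add continuousAt_id).rpow_const (Or.inl (by norm_num))).neg
      |>.continuousWithinAt
  have hderiv : ∀ x ∈ Ioi (0 : ℝ), HasDerivAt (fun t : ℝ => -(1 + t) ^ (-2 : ℝ))
      (2 * (1 + x) ^ (-3 : ℝ)) x := fun x hx => hasDerivAt_neg_one_add_rpow_neg_two hx
  have hpos : ∀ x ∈ Ioi (0 : ℝ), 0 ≤ 2 * (1 + x) ^ (-3 : ℝ) := fun x hx => by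
    have : 0 < 1 + x := by simp only [mem_Ioi] at hx; linarith
    positivity
  have hlim : Tendsto (fun t : ℝ => -(1 + t) ^ (-2 : ℝ)) atTop (𝓝 0) := by
    simpa using ((tendsto_rpow_neg_atTop two_pos).comp
      (tendsto_atTop_add_const_left _ 1 tendsto_id)).neg
  refine ⟨integrableOn_Ioi_deriv_of_nonneg hcont hderiv hpos hlim, ?_⟩
  rw [integral_Ioi_of_hasDerivAt_of_nonneg hcont hderiv hpos hlim]
  norm_num

section Probability

variable {Ω : Type*} [MeasurableSpace Ω] {μ : Measure Ω}

lemma psi2Norm_le_of_integral_le {Z : Ω → ℝ} {c : ℝ} (hc : 0 < c)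
    (h : ∫ ω, exp (Z ω ^ 2 / c ^ 2) ∂μ ≤ 2) : psi2Norm μ Z ≤ c :=
  csInf_le ⟨0, fun _ hk => hk.1.le⟩ ⟨hc, h⟩

/-- A non-integrable `exp (s Z²)` makes `E exp (Z²/c²)` a junk `0` for all small `c`. -/
lemma psi2Norm_le_of_not_integrable [IsFiniteMeasure μ] {Z : Ω → ℝ} (hZ : AEMeasurable Z μ)
    {s : ℝ} (hs : ¬ Integrable (fun ω => exp (s * Z ω ^ 2)) μ) {d : ℝ} (hd : 0 < d) :
    psi2Norm μ Z ≤ d := by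
  have hmeas : ∀ r, AEStronglyMeasurable (fun ω => exp (r * Z ω ^ 2)) μ := fun r => by
    fun_prop
  have hs0 : 0 < s := by
    by_contra! h
    refine hs ((integrable_const (1 : ℝ)).mono' (hmeas s) (ae_of_all _ fun ω => ?_))
    rw [norm_of_nonneg (exp_pos _).le, exp_le_one_iff]
    nlinarith [sq_nonneg (Z ω)]
  set c := min d (√s)⁻¹
  have hc : 0 < c := by positivity
  have hsc : s ≤ (c ^ 2)⁻¹ := by
    rw [le_inv_comm₀ hs0 (by positivity)]
    calc c ^ 2 ≤ ((√s)⁻¹) ^ 2 := pow_le_pow_left₀ hc.le (min_le_right _ _) 2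
      _ = s⁻¹ := by rw [inv_pow, sq_sqrt hs0.le]
  refine (psi2Norm_le_of_integral_le hc ?_).trans (min_le_left _ _)
  rw [integral_undef fun h => hs (h.mono' (hmeas s) (ae_of_all _ fun ω => ?_))]
  · norm_num
  rw [norm_of_nonneg (exp_pos _).le, div_eq_inv_mul, exp_le_exp]
  exact mul_le_mul_of_nonneg_right hsc (sq_nonneg _)

lemma tendsto_integral_exp_sq_div_atTop [IsProbabilityMeasure μ] {Y : Ω → ℝ}
    (hint : ∀ s, Integrable (fun ω => exp (s * Y ω ^ 2)) μ) :
    Tendsto (fun c => ∫ ω, exp (Y ω ^ 2 / c ^ 2) ∂μ) atTop (𝓝 1) := by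
  have hlim : Tendsto (fun c : ℝ => (c ^ 2)⁻¹) atTop (𝓝 0) :=
    (tendsto_pow_atTop two_ne_zero).inv_tendsto_atTop
  simp_rw [div_eq_inv_mul]
  convert tendsto_integral_filter_of_dominated_convergence (fun ω => exp (Y ω ^ 2))
    (Eventually.of_forall fun c => (hint (c ^ 2)⁻¹).aestronglyMeasurable)
    ((eventually_ge_atTop 1).mono fun c hc => ae_of_all _ fun ω => ?_) (by simpa using hint 1)
    (ae_of_all _ fun ω =>
      ((continuous_exp.comp (continuous_mul_const (Y ω ^ 2))).tendsto 0).comp hlim)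
  · simp
  rw [norm_of_nonneg (exp_pos _).le, exp_le_exp]
  exact mul_le_of_le_one_left (sq_nonneg _) (inv_le_one_of_one_le₀ (one_le_pow₀ hc))

lemma integral_exp_sq_div_le_two_of_psi2Norm_lt [IsProbabilityMeasure μ] {Y : Ω → ℝ}
    (hint : ∀ s, Integrable (fun ω => exp (s * Y ω ^ 2)) μ) {c : ℝ} (h : psi2Norm μ Y < c) :
    ∫ ω, exp (Y ω ^ 2 / c ^ 2) ∂μ ≤ 2 := by
  have hne : {k : ℝ | 0 < k ∧ ∫ ω, exp (Y ω ^ 2 / k ^ 2) ∂μ ≤ 2}.Nonempty :=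
    (((tendsto_integral_exp_sq_div_atTop hint).eventually (gt_mem_nhds one_lt_two)).and
      (eventually_gt_atTop 0)).exists.imp fun k hk => ⟨hk.2, hk.1.le⟩
  obtain ⟨k, ⟨hk, hk2⟩, hkc⟩ := exists_lt_of_csInf_lt hne h
  refine le_trans (integral_mono (by simpa only [div_eq_inv_mul] using hint (c ^ 2)⁻¹)
    (by simpa only [div_eq_inv_mul] using hint (k ^ 2)⁻¹) fun ω => ?_) hk2
  gcongr

/-- Layer cake: `P (exp (Z²/3a) - 1 > t) ≤ 2 (1 + t)⁻³`, whose integral over `t > 0` is `1`. -/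
lemma psi2Norm_le_of_tail [IsProbabilityMeasure μ] {Z : Ω → ℝ} {a : ℝ} (ha : 0 < a)
    (hint : Integrable (fun ω => exp (Z ω ^ 2 / (3 * a))) μ)
    (htail : ∀ t, 0 ≤ t → μ.real {ω | t ≤ |Z ω|} ≤ 2 * exp (-(t ^ 2 / a))) :
    psi2Norm μ Z ≤ √(3 * a) := by
  set f : Ω → ℝ := fun ω => exp (Z ω ^ 2 / (3 * a)) - 1
  have hf : 0 ≤ᵐ[μ] f := ae_of_all _ fun ω => by
    simp only [Pi.zero_apply, f, sub_nonneg, one_le_exp_iff]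
    positivity
  have hlevel : ∀ t, 0 < t → μ.real {ω | t < f ω} ≤ 2 * (1 + t) ^ (-3 : ℝ) := by
    intro t ht
    have h1t : 0 < 1 + t := by linarith
    have hsub : {ω | t < f ω} ⊆ {ω | √(3 * a * log (1 + t)) ≤ |Z ω|} := by
      intro ω hω
      have : log (1 + t) < Z ω ^ 2 / (3 * a) :=
        (log_lt_iff_lt_exp h1t).2 (by simp only [mem_ofPred_eq, f] at hω; linarith)
      rw [mem_ofPred_eq, ← sqrt_sq_eq_abs]
      exact sqrt_le_sqrt (by rw [lt_div_iff₀ (by positivity)] at this; linarith)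
    calc μ.real {ω | t < f ω} ≤ μ.real {ω | √(3 * a * log (1 + t)) ≤ |Z ω|} :=
          measureReal_mono hsub
      _ ≤ 2 * exp (-(√(3 * a * log (1 + t)) ^ 2 / a)) := htail _ (sqrt_nonneg _)
      _ = 2 * (1 + t) ^ (-3 : ℝ) := by
          have hlog := log_nonneg (by linarith : (1 : ℝ) ≤ 1 + t)
          rw [sq_sqrt (by positivity), rpow_def_of_pos h1t]
          congr 2
          field_simp
  obtain ⟨hgint, hgval⟩ := integrableOn_and_integral_Ioi_two_mul_one_add_rpow_neg_three
  have hfint : ∫ ω, f ω ∂μ ≤ 1 := by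
    rw [(show Integrable f μ from hint.sub (integrable_const 1)).integral_eq_integral_meas_lt hf,
      ← hgval]
    exact integral_mono_of_nonneg (ae_of_all _ fun _ => measureReal_nonneg) hgint
      ((ae_restrict_iff' measurableSet_Ioi).2 (ae_of_all _ hlevel))
  refine psi2Norm_le_of_integral_le (by positivity) ?_
  rw [sq_sqrt (by positivity)]
  have := integral_sub hint (integrable_const (1 : ℝ) (μ := μ))
  simp only [integral_const, probReal_univ, smul_eq_mul, mul_one] at this
  change ∫ ω, f ω ∂μ = _ at this
  linarith

lemma mgf_sq_sub_one_le [IsProbabilityMeasure μ] {Y : Ω → ℝ} {L : ℝ} (hL : L ≠ 0)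
    (hint : ∀ s, Integrable (fun ω => exp (s * Y ω ^ 2)) μ) (hvar : ∫ ω, Y ω ^ 2 ∂μ = 1)
    (hpsi : ∫ ω, exp (Y ω ^ 2 / L ^ 2) ∂μ ≤ 2) {s : ℝ} (hs : s ≤ (4 * L ^ 2)⁻¹) :
    mgf (fun ω => Y ω ^ 2 - 1) μ s ≤ exp (64 * L ^ 4 * s ^ 2) := by
  have hY2 : Integrable (fun ω => Y ω ^ 2) μ :=
    Integrable.of_integral_ne_zero (by rw [hvar]; exact one_ne_zero)
  have hpsi_int : Integrable (fun ω => exp (Y ω ^ 2 / L ^ 2)) μ := by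
    simpa only [div_eq_inv_mul] using hint (L ^ 2)⁻¹
  have hlin : Integrable (fun ω => 1 + s * Y ω ^ 2) μ :=
    (integrable_const 1).add (hY2.const_mul s)
  have hmgf : mgf (fun ω => Y ω ^ 2) μ s ≤ 1 + s + 64 * L ^ 4 * s ^ 2 :=
    calc ∫ ω, exp (s * Y ω ^ 2) ∂μ
        ≤ ∫ ω, (1 + s * Y ω ^ 2 + 32 * L ^ 4 * s ^ 2 * exp (Y ω ^ 2 / L ^ 2)) ∂μ :=
          integral_mono (hint s) (hlin.add (hpsi_int.const_mul _))
            fun ω => exp_mul_sq_le hL hs (Y ω)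
      _ = 1 + s + 32 * L ^ 4 * s ^ 2 * ∫ ω, exp (Y ω ^ 2 / L ^ 2) ∂μ := by
          rw [integral_add hlin (hpsi_int.const_mul _),
            integral_add (integrable_const 1) (hY2.const_mul s), integral_const_mul,
            integral_const_mul, hvar]
          simp
      _ ≤ 1 + s + 64 * L ^ 4 * s ^ 2 := by
          have := mul_le_mul_of_nonneg_left hpsi (by positivity : 0 ≤ 32 * L ^ 4 * s ^ 2)
          linarith
  simp_rw [sub_eq_add_neg]
  rw [mgf_add_const]
  calc mgf (fun ω => Y ω ^ 2) μ s * exp (s * -1)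
      ≤ exp (s + 64 * L ^ 4 * s ^ 2) * exp (s * -1) := by
        gcongr
        linarith [add_one_le_exp (s + 64 * L ^ 4 * s ^ 2)]
    _ = exp (64 * L ^ 4 * s ^ 2) := by rw [← exp_add]; ring_nf

lemma integral_sq_sum_mul_eq_sum_sq {ι : Type*} [Fintype ι] [DecidableEq ι] {V : Ω → ι → ℝ}
    (hV : AEMeasurable V μ)
    (hiso : ∀ j k, ∫ ω, V ω j * V ω k ∂μ = if j = k then 1 else 0) (x : ι → ℝ) :
    ∫ ω, (∑ j, V ω j * x j) ^ 2 ∂μ = ∑ j, x j ^ 2 := by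
  have hL2 : ∀ j, MemLp (fun ω => V ω j) 2 μ := fun j =>
    (memLp_two_iff_integrable_sq
      ((measurable_pi_apply j).comp_aemeasurable hV).aestronglyMeasurable).2
        (Integrable.of_integral_ne_zero (by simp [sq, hiso]))
  have hprod : ∀ j k, Integrable (fun ω => x j * x k * (V ω j * V ω k)) μ := fun j k =>
    ((hL2 j).integrable_mul (hL2 k)).const_mul _
  calc ∫ ω, (∑ j, V ω j * x j) ^ 2 ∂μ
      = ∫ ω, ∑ j, ∑ k, x j * x k * (V ω j * V ω k) ∂μ := by
        congr 1 with ω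
        rw [sq, Finset.sum_mul_sum]
        exact Finset.sum_congr rfl fun j _ => Finset.sum_congr rfl fun k _ => by ring
    _ = ∑ j, ∑ k, x j * x k * ∫ ω, V ω j * V ω k ∂μ := by
        rw [integral_finsetSum _ fun j _ => integrable_finsetSum _ fun k _ => hprod j k]
        simp_rw [integral_finsetSum _ fun k _ => hprod _ k, integral_const_mul]
    _ = ∑ j, x j ^ 2 := by simp [hiso, sq]

lemma integrable_exp_mul_sq_of_sq_le {f g : Ω → ℝ} (hf : AEMeasurable f μ) {a c : ℝ}
    (hfg : ∀ ω, f ω ^ 2 ≤ a * g ω ^ 2 + c)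
    (hg : ∀ s, Integrable (fun ω => exp (s * g ω ^ 2)) μ) (s : ℝ) :
    Integrable (fun ω => exp (s * f ω ^ 2)) μ := by
  refine ((hg (|s| * a)).const_mul (exp (|s| * c))).mono' (by fun_prop)
    (ae_of_all _ fun ω => ?_)
  rw [norm_of_nonneg (exp_pos _).le, ← exp_add, exp_le_exp]
  nlinarith [abs_nonneg s, le_abs_self s, mul_le_mul_of_nonneg_left (hfg ω) (abs_nonneg s),
    sq_nonneg (f ω)]

section IndependentSums

variable [IsProbabilityMeasure μ] {ι : Type*} [Fintype ι] [Nonempty ι] {X : ι → Ω → ℝ}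
  {b s₀ : ℝ}

/-- Chernoff's bound at `s = min (u / (2 |ι| b)) s₀`. -/
lemma measureReal_le_sum_le_exp_neg_min (hmeas : ∀ i, Measurable (X i))
    (hindep : iIndepFun X μ) (hb : 0 < b) (hs₀ : 0 ≤ s₀)
    (hint : ∀ i s, 0 ≤ s → s ≤ s₀ → Integrable (fun ω => exp (s * X i ω)) μ)
    (hmgf : ∀ i s, 0 ≤ s → s ≤ s₀ → mgf (X i) μ s ≤ exp (b * s ^ 2)) {u : ℝ} (hu : 0 ≤ u) :
    μ.real {ω | u ≤ ∑ i, X i ω} ≤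
      exp (-min (u ^ 2 / (4 * Fintype.card ι * b)) (s₀ * u / 2)) := by
  set β : ℝ := Fintype.card ι * b
  have hβ : 0 < β := by positivity
  set s := min (u / (2 * β)) s₀ with hs_def
  have hs0 : 0 ≤ s := le_min (by positivity) hs₀
  have hss₀ : s ≤ s₀ := min_le_right _ _
  have hsum_mgf : mgf (∑ i, X i) μ s ≤ exp (β * s ^ 2) :=
    calc mgf (∑ i, X i) μ s = ∏ i, mgf (X i) μ s := hindep.mgf_sum hmeas _
      _ ≤ ∏ _i : ι, exp (b * s ^ 2) :=
          Finset.prod_le_prod (fun _ _ => mgf_nonneg) fun i _ => hmgf i s hs0 hss₀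
      _ = exp (β * s ^ 2) := by
          rw [← exp_sum, Finset.sum_const, Finset.card_univ, nsmul_eq_mul, mul_assoc]
  have hβs : β * s ≤ u / 2 :=
    calc β * s ≤ β * (u / (2 * β)) := mul_le_mul_of_nonneg_left (min_le_left _ _) hβ.le
      _ = u / 2 := by field_simp
  have hexponent : -s * u + β * s ^ 2 ≤ -min (u ^ 2 / (4 * β)) (s₀ * u / 2) := by
    have hmin : min (u ^ 2 / (4 * β)) (s₀ * u / 2) ≤ s * u / 2 := by
      rcases min_choice (u / (2 * β)) s₀ with h | h
      · refine (min_le_left _ _).trans_eq ?_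
        rw [hs_def, h]; field_simp; ring
      · exact (min_le_right _ _).trans_eq (by rw [hs_def, h])
    nlinarith
  calc μ.real {ω | u ≤ ∑ i, X i ω}
      = μ.real {ω | u ≤ (∑ i, X i) ω} := by simp only [Finset.sum_apply]
    _ ≤ exp (-s * u) * mgf (∑ i, X i) μ s :=
        measure_ge_le_exp_mul_mgf u hs0
          (hindep.integrable_exp_mul_sum hmeas fun i _ => hint i s hs0 hss₀)
    _ ≤ exp (-s * u) * exp (β * s ^ 2) := by gcongr
    _ ≤ exp (-min (u ^ 2 / (4 * β)) (s₀ * u / 2)) := by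
        rw [← exp_add]; exact exp_le_exp.2 hexponent
    _ = exp (-min (u ^ 2 / (4 * Fintype.card ι * b)) (s₀ * u / 2)) := by
        rw [mul_assoc]

lemma measureReal_le_abs_sum_le_two_mul_exp_neg_min (hmeas : ∀ i, Measurable (X i))
    (hindep : iIndepFun X μ) (hb : 0 < b) (hs₀ : 0 ≤ s₀)
    (hint : ∀ i s, |s| ≤ s₀ → Integrable (fun ω => exp (s * X i ω)) μ)
    (hmgf : ∀ i s, |s| ≤ s₀ → mgf (X i) μ s ≤ exp (b * s ^ 2)) {u : ℝ} (hu : 0 ≤ u) :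
    μ.real {ω | u ≤ |∑ i, X i ω|} ≤
      2 * exp (-min (u ^ 2 / (4 * Fintype.card ι * b)) (s₀ * u / 2)) := by
  have hupper := measureReal_le_sum_le_exp_neg_min hmeas hindep hb hs₀
    (fun i s hs hs' => hint i s (abs_le.2 ⟨by linarith, hs'⟩))
    (fun i s hs hs' => hmgf i s (abs_le.2 ⟨by linarith, hs'⟩)) hu
  have hlower := measureReal_le_sum_le_exp_neg_min (X := fun i ω => -X i ω)
    (fun i => (hmeas i).neg) (hindep.comp (fun _ => Neg.neg) fun _ => measurable_neg) hb hs₀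
    (fun i s hs hs' => by
      simpa only [mul_neg, neg_mul] using
        hint i (-s) (by rw [abs_neg, abs_le]; constructor <;> linarith))
    (fun i s hs hs' => by
      rw [show (fun ω => -X i ω) = -X i from rfl, mgf_neg, ← neg_sq]
      exact hmgf i (-s) (by rw [abs_neg, abs_le]; constructor <;> linarith)) hu
  simp only [Finset.sum_neg_distrib] at hlower
  calc μ.real {ω | u ≤ |∑ i, X i ω|}
      ≤ μ.real ({ω | u ≤ ∑ i, X i ω} ∪ {ω | u ≤ -∑ i, X i ω}) :=
        measureReal_mono fun ω (hω : u ≤ _) => le_abs.1 hω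
    _ ≤ _ := (measureReal_union_le _ _).trans (by linarith)

/-- `‖Y‖² - m` is a sum of independent sub-exponential variables `Yᵢ² - 1`: Bernstein's
inequality at level `u = max (t √m) t²` bounds the deviation `|‖Y‖ - √m| ≥ t`. -/
theorem measureReal_le_abs_sqrt_sum_sq_sub_sqrt_card_le {Y : ι → Ω → ℝ}
    (hmeas : ∀ i, Measurable (Y i)) (hindep : iIndepFun Y μ)
    (hint : ∀ i s, Integrable (fun ω => exp (s * Y i ω ^ 2)) μ)
    (hvar : ∀ i, ∫ ω, Y i ω ^ 2 ∂μ = 1) {L : ℝ} (hL : 1 ≤ L)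
    (hpsi : ∀ i, ∫ ω, exp (Y i ω ^ 2 / L ^ 2) ∂μ ≤ 2) {t : ℝ} (ht : 0 ≤ t) :
    μ.real {ω | t ≤ |√(∑ i, Y i ω ^ 2) - √(Fintype.card ι)|} ≤
      2 * exp (-(t ^ 2 / (256 * L ^ 4))) := by
  set m : ℝ := (Fintype.card ι : ℝ)
  have hm : 0 < m := by simp only [m]; exact_mod_cast Fintype.card_pos
  set u := max (t * √m) (t ^ 2)
  have hu : 0 ≤ u := (sq_nonneg t).trans (le_max_right _ _)
  have hbernstein := measureReal_le_abs_sum_le_two_mul_exp_neg_min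
    (X := fun i ω => Y i ω ^ 2 - 1) (b := 64 * L ^ 4) (s₀ := (4 * L ^ 2)⁻¹)
    (fun i => ((hmeas i).pow_const 2).sub_const 1)
    (hindep.comp (fun _ y => y ^ 2 - 1) fun _ => by fun_prop) (by positivity) (by positivity)
    (fun i s _ => by
      have : (fun ω => exp (s * (Y i ω ^ 2 - 1))) =
          fun ω => exp (s * Y i ω ^ 2) * exp (-s) := by
        ext ω; rw [← exp_add]; ring_nf
      simpa only [this] using (hint i s).mul_const _)
    (fun i s hs => mgf_sq_sub_one_le (by positivity) (hint i) (hvar i) (hpsi i)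
      ((le_abs_self s).trans hs)) hu
  have hsub : {ω | t ≤ |√(∑ i, Y i ω ^ 2) - √m|} ⊆ {ω | u ≤ |∑ i, (Y i ω ^ 2 - 1)|} := by
    intro ω (hω : t ≤ _)
    have h := le_abs_sq_sub_sq_of_le_abs_sub (sqrt_nonneg _) (sqrt_nonneg _) ht hω
    rw [sq_sqrt (Finset.sum_nonneg fun i _ => sq_nonneg _), sq_sqrt hm.le] at h
    show u ≤ _
    rwa [Finset.sum_sub_distrib, Finset.sum_const, Finset.card_univ, nsmul_one]
  have hexponent : t ^ 2 / (256 * L ^ 4) ≤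
      min (u ^ 2 / (4 * m * (64 * L ^ 4))) ((4 * L ^ 2)⁻¹ * u / 2) := by
    have hL4 : 8 * L ^ 2 ≤ 256 * L ^ 4 := by nlinarith [sq_nonneg L, one_le_pow₀ (n := 2) hL]
    apply le_min
    · have htm : t ^ 2 * m ≤ u ^ 2 := by
        calc t ^ 2 * m = (t * √m) ^ 2 := by rw [mul_pow, sq_sqrt hm.le]
          _ ≤ u ^ 2 := pow_le_pow_left₀ (by positivity) (le_max_left _ _) 2
      rw [div_le_div_iff₀ (by positivity) (by positivity)]
      nlinarith [pow_pos (by linarith : (0 : ℝ) < L) 4]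
    · calc t ^ 2 / (256 * L ^ 4) ≤ t ^ 2 / (8 * L ^ 2) := by gcongr
        _ ≤ u / (8 * L ^ 2) := by gcongr; exact le_max_right _ _
        _ = (4 * L ^ 2)⁻¹ * u / 2 := by field_simp; ring
  calc μ.real {ω | t ≤ |√(∑ i, Y i ω ^ 2) - √m|}
      ≤ μ.real {ω | u ≤ |∑ i, (Y i ω ^ 2 - 1)|} := measureReal_mono hsub
    _ ≤ 2 * exp (-min (u ^ 2 / (4 * m * (64 * L ^ 4))) ((4 * L ^ 2)⁻¹ * u / 2)) :=
        hbernstein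
    _ ≤ 2 * exp (-(t ^ 2 / (256 * L ^ 4))) := by gcongr

end IndependentSums

end Probability

/-- **Concentration of a random matrix on a single vector:**
`‖ ‖Ax‖₂ − √m ‖_ψ₂ ≤ C K²` for every unit vector `x`. -/
theorem concentration_on_single_vector :
    ∃ C : ℝ, 0 < C ∧
    ∀ (Ω : Type) [MeasurableSpace Ω] (μ : Measure Ω), IsProbabilityMeasure μ →
      ∀ (m n : ℕ) (A : Ω → Fin m → Fin n → ℝ) (K : ℝ),
        1 ≤ K → IsIsotropicSubGaussian μ A K →
        ∀ x : Fin n → ℝ, l2norm x = 1 →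
        psi2Norm μ (fun ω => l2norm (matVec (A ω) x) - Real.sqrt m) ≤ C * K ^ 2 := by
  refine ⟨112, by norm_num, fun Ω _ μ _ m n A K hK hA x hx => ?_⟩
  set Y : Fin m → Ω → ℝ := fun i ω => ∑ j, A ω i j * x j
  set Z : Ω → ℝ := fun ω => l2norm (matVec (A ω) x) - √m
  have hrow : ∀ i : Fin m, Measurable fun v : Fin n → ℝ => ∑ j, v j * x j := fun _ => by fun_prop
  have hY : ∀ i, Measurable (Y i) := fun i =>
    (hrow i).comp ((measurable_pi_apply i).comp hA.measurable)
  have hZ : Measurable Z :=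
    (Finset.measurable_sum _ fun i _ => (hY i).pow_const 2).sqrt.sub_const _
  rcases Nat.eq_zero_or_pos m with rfl | hm
  · exact psi2Norm_le_of_integral_le (by positivity) (by simp [Z, l2norm, matVec])
  have : Nonempty (Fin m) := ⟨⟨0, hm⟩⟩
  by_cases hI : ∀ s, Integrable (fun ω => exp (s * Z ω ^ 2)) μ
  swap
  · obtain ⟨s, hs⟩ := not_forall.1 hI
    exact psi2Norm_le_of_not_integrable hZ.aemeasurable hs (by positivity)
  -- `psi2Norm μ Yᵢ ≤ K` gives no integrability (its junk value is `0`); `Yᵢ² ≤ 2 Z² + 2m` does.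
  have hYint : ∀ i s, Integrable (fun ω => exp (s * Y i ω ^ 2)) μ := fun i =>
    integrable_exp_mul_sq_of_sq_le (hY i).aemeasurable
      (fun ω => sq_le_two_mul_sq_sqrt_sum_sq_sub_add (Y · ω) i √m) hI
  have hvar : ∀ i, ∫ ω, Y i ω ^ 2 ∂μ = 1 := fun i =>
    (integral_sq_sum_mul_eq_sum_sq ((measurable_pi_apply i).comp hA.measurable).aemeasurable
      (hA.isotropic i) x).trans (sqrt_eq_one.1 hx)
  have hpsi : ∀ i, ∫ ω, exp (Y i ω ^ 2 / (2 * K) ^ 2) ∂μ ≤ 2 := fun i =>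
    integral_exp_sq_div_le_two_of_psi2Norm_lt (hYint i)
      ((hA.subgaussian i x hx).trans_lt (by linarith))
  have htail := fun t (ht : 0 ≤ t) => measureReal_le_abs_sqrt_sum_sq_sub_sqrt_card_le hY
    (hA.indep.comp _ hrow) hYint hvar (by linarith : 1 ≤ 2 * K) hpsi ht
  simp only [Fintype.card_fin] at htail
  calc psi2Norm μ Z ≤ √(3 * (256 * (2 * K) ^ 4)) :=
        psi2Norm_le_of_tail (by positivity) (by simpa only [div_eq_inv_mul] using hI _) htail
    _ ≤ 112 * K ^ 2 :=
        sqrt_le_iff.2 ⟨by positivity, by nlinarith [pow_pos (by linarith : 0 < K) 4]⟩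

end
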